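/- arXiv:2002.07830 — 3 statements merged into one kernel-verified Lean document; each statement's English description precedes it below -/
import Mathlib

section
/- Let Ω be a neighborhood of the origin in ℂ and Φ : Ω → ℝ a function with Φ(w) ≥ 0 for all w ∈ Ω. Suppose there is a positive integer n and complex constants c₀, c₁, …, cₙ such that Φ(w) = Σ_{p=0}^{n} c_p · w^p · conj(w)^{n−p} + O(|w|^{n+1}) as |w| → 0. If n is odd, then c_p = 0 for all p ∈ {0, 1, …, n}. -/
/-!
Let `P(w) = ∑ c_p w^p conj(w)^(n-p)`. For odd `n`, `P(-w) = -P(w)`, so nonnegativity of `Φ`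
at both `w` and `-w` bounds `Re P(w)` from both sides, and `P(w) = O(|w|^(n+1))`. Since `P` is
homogeneous of degree `n` under real scaling, this forces `P ≡ 0`. On the unit circle
`conj w = w⁻¹`, so `w^n P(w) = ∑ c_p w^(2p)` is a polynomial with infinitely many roots, and
all `c_p` vanish.
-/

open Filter Topology Asymptotics Metric Polynomial ComplexConjugate

theorem eq_zero_of_smul_homogeneous_of_isBigO {E F : Type*} [NormedAddCommGroup E]
    [NormedSpace ℝ E] [NormedAddCommGroup F] [NormedSpace ℝ F] {f : E → F} {n : ℕ}
    (hom : ∀ t : ℝ, 0 < t → ∀ z, f (t • z) = t ^ n • f z)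
    (hf : f =O[𝓝 0] fun z => ‖z‖ ^ (n + 1)) : f = 0 := by
  funext z
  obtain ⟨C, hC⟩ := hf.bound
  have hsmul : Tendsto (fun t : ℝ => t • z) (𝓝[>] 0) (𝓝 0) :=
    tendsto_nhdsWithin_of_tendsto_nhds
      ((continuous_id.smul continuous_const).tendsto' 0 0 (zero_smul ℝ z))
  have hbound : ∀ᶠ t : ℝ in 𝓝[>] 0, ‖f z‖ ≤ C * ‖z‖ ^ (n + 1) * t := by
    filter_upwards [hsmul.eventually hC, self_mem_nhdsWithin] with t ht (htpos : 0 < t)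
    rw [hom t htpos, norm_smul, norm_pow, norm_pow, norm_norm, norm_smul,
      Real.norm_of_nonneg htpos.le] at ht
    refine le_of_mul_le_mul_left ?_ (pow_pos htpos n)
    calc t ^ n * ‖f z‖ ≤ C * (t * ‖z‖) ^ (n + 1) := ht
      _ = t ^ n * (C * ‖z‖ ^ (n + 1) * t) := by ring
  have hlim : Tendsto (fun t : ℝ => C * ‖z‖ ^ (n + 1) * t) (𝓝[>] 0) (𝓝 0) := by
    simpa using ((tendsto_id (x := 𝓝 (0 : ℝ))).const_mul (C * ‖z‖ ^ (n + 1))).mono_left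
      nhdsWithin_le_nhds
  exact norm_le_zero_iff.mp (ge_of_tendsto hlim hbound)

theorem Complex.norm_le_of_nonneg_sub_of_nonneg_add {a b : ℝ} (ha : 0 ≤ a) (hb : 0 ≤ b)
    {z : ℂ} {e : ℝ} (h₁ : ‖(a : ℂ) - z‖ ≤ e) (h₂ : ‖(b : ℂ) + z‖ ≤ e) : ‖z‖ ≤ 2 * e := by
  have hre₁ := (abs_le.mp ((Complex.abs_re_le_norm _).trans h₁)).2
  have hre₂ := (abs_le.mp ((Complex.abs_re_le_norm _).trans h₂)).2
  have him := (Complex.abs_im_le_norm _).trans h₂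
  simp only [Complex.sub_re, Complex.add_re, Complex.ofReal_re, Complex.add_im,
    Complex.ofReal_im, zero_add] at hre₁ hre₂ him
  have hre : |z.re| ≤ e := abs_le.mpr ⟨by linarith, by linarith⟩
  linarith [Complex.norm_le_abs_re_add_abs_im z]

noncomputable def homogeneousConjPoly (c : ℕ → ℂ) (n : ℕ) (w : ℂ) : ℂ :=
  ∑ p ∈ Finset.range (n + 1), c p * w ^ p * conj w ^ (n - p)

namespace homogeneousConjPoly

variable (c : ℕ → ℂ) {n : ℕ}

theorem real_smul (t : ℝ) (w : ℂ) :
    homogeneousConjPoly c n (t • w) = t ^ n • homogeneousConjPoly c n w := by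
  simp only [homogeneousConjPoly, Complex.real_smul, Finset.mul_sum, map_mul, Complex.conj_ofReal,
    Complex.ofReal_pow]
  refine Finset.sum_congr rfl fun p hp => ?_
  rw [← Nat.add_sub_cancel' (Finset.mem_range_succ_iff.mp hp), pow_add, Nat.add_sub_cancel_left]
  ring

theorem neg (hn : Odd n) (w : ℂ) : homogeneousConjPoly c n (-w) = -homogeneousConjPoly c n w := by
  simpa [hn.neg_one_pow] using real_smul c (n := n) (-1) w

theorem eval_eq_mul (w : ℂ) (hw : ‖w‖ = 1) :
    (∑ p ∈ Finset.range (n + 1), C (c p) * X ^ (2 * p)).eval w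
      = w ^ n * homogeneousConjPoly c n w := by
  have hconj : w * conj w = 1 := by
    rw [Complex.mul_conj, Complex.normSq_eq_norm_sq, hw]; norm_num
  simp only [homogeneousConjPoly, eval_finsetSum, eval_mul, eval_C, eval_pow, eval_X,
    Finset.mul_sum]
  refine Finset.sum_congr rfl fun p hp => ?_
  obtain ⟨k, rfl⟩ := Nat.exists_eq_add_of_le (Finset.mem_range_succ_iff.mp hp)
  rw [Nat.add_sub_cancel_left]
  calc c p * w ^ (2 * p) = c p * w ^ (2 * p) * (w * conj w) ^ k := by rw [hconj, one_pow, mul_one]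
    _ = w ^ (p + k) * (c p * w ^ p * conj w ^ k) := by ring

theorem coeff_eq_zero_of_eq_zero_on_sphere
    (h : ∀ w, ‖w‖ = 1 → homogeneousConjPoly c n w = 0) :
    ∀ p ≤ n, c p = 0 := by
  set Q := ∑ p ∈ Finset.range (n + 1), C (c p) * X ^ (2 * p)
  have hsphere : (sphere (0 : ℂ) 1).Infinite :=
    (isPreconnected_sphere (by rw [Complex.rank_real_complex]; norm_num) 0 1).infinite_of_nontrivial
      ⟨1, by simp, -1, by simp, by norm_num⟩
  have hQ : Q = 0 := eq_zero_of_infinite_isRoot Q <| hsphere.mono fun w hw => by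
    rw [mem_sphere_zero_iff_norm] at hw
    simp [IsRoot, Q, eval_eq_mul c w hw, h w hw]
  intro p hp
  have hcoeff : Q.coeff (2 * p) = c p := by
    simp only [Q, finsetSum_coeff, coeff_C_mul, coeff_X_pow]
    rw [Finset.sum_eq_single p (fun q _ hq => by simp [Ne.symm hq])
      (fun hp' => absurd (Finset.mem_range_succ_iff.mpr hp) hp')]
    simp
  rw [← hcoeff, hQ, coeff_zero]

end homogeneousConjPoly

theorem stmt0_general (Ω : Set ℂ) (hΩ : Ω ∈ nhds (0 : ℂ)) (Φ : ℂ → ℝ)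
    (hΦ : ∀ w ∈ Ω, 0 ≤ Φ w) (n : ℕ) (hodd : Odd n)
    (c : ℕ → ℂ)
    (hexp : ∃ C > (0 : ℝ), ∃ r > (0 : ℝ), ∀ w : ℂ, ‖w‖ < r →
      ‖(Φ w : ℂ) - ∑ p ∈ Finset.range (n + 1),
          c p * w ^ p * (starRingEnd ℂ w) ^ (n - p)‖ ≤ C * ‖w‖ ^ (n + 1)) :
    ∀ p ≤ n, c p = 0 := by
  obtain ⟨C, -, r, hr, happrox⟩ := hexp
  have hbigO : homogeneousConjPoly c n =O[𝓝 0] fun w => ‖w‖ ^ (n + 1) := by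
    refine IsBigO.of_bound (2 * C) ?_
    filter_upwards [hΩ, (continuous_neg.tendsto' 0 0 neg_zero).eventually_mem hΩ,
      ball_mem_nhds 0 hr] with w hw hnegw hwr
    rw [mem_ball_zero_iff] at hwr
    have hneg := happrox (-w) (by rwa [norm_neg])
    rw [← homogeneousConjPoly, homogeneousConjPoly.neg c hodd, sub_neg_eq_add, norm_neg] at hneg
    rw [norm_pow, norm_norm, mul_assoc]
    exact Complex.norm_le_of_nonneg_sub_of_nonneg_add (hΦ w hw) (hΦ (-w) hnegw)
      (happrox w hwr) hneg
  have hzero := eq_zero_of_smul_homogeneous_of_isBigO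
    (fun t _ w => homogeneousConjPoly.real_smul c t w) hbigO
  exact homogeneousConjPoly.coeff_eq_zero_of_eq_zero_on_sphere c fun w _ => congrFun hzero w

/-- If `Φ ≥ 0` near `0 ∈ ℂ` and `Φ(w) = ∑_{p=0}^{n} c_p w^p conj(w)^{n-p} + O(|w|^{n+1})`
with `n` odd, then all coefficients `c_p` vanish. -/
theorem stmt0 (Ω : Set ℂ) (hΩ : Ω ∈ nhds (0 : ℂ)) (Φ : ℂ → ℝ)
    (hΦ : ∀ w ∈ Ω, 0 ≤ Φ w) (n : ℕ) (hn : 0 < n) (hodd : Odd n)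
    (c : ℕ → ℂ)
    (hexp : ∃ C > (0 : ℝ), ∃ r > (0 : ℝ), ∀ w : ℂ, ‖w‖ < r →
      ‖(Φ w : ℂ) - ∑ p ∈ Finset.range (n + 1),
          c p * w ^ p * (starRingEnd ℂ w) ^ (n - p)‖ ≤ C * ‖w‖ ^ (n + 1)) :
    ∀ p ≤ n, c p = 0 :=
  stmt0_general Ω hΩ Φ hΦ n hodd c hexp
end

section
/- Let Ω be a neighborhood of the origin in ℂ and Φ : Ω → ℝ a function with Φ(w) ≥ 0 for all w ∈ Ω. Suppose there is an even positive integer n = 2m and complex constants c₀, …, cₙ such that Φ(w) = Σ_{p=0}^{n} c_p · w^p · conj(w)^{n−p} + O(|w|^{n+1}) as |w| → 0. Then c_m is a non-negative real number, and if c_m = 0 then c_p = 0 for all p. -/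
/-!
Write `P` for the degree-`n` part. Along a ray, `P (t z) = tⁿ P z`, so `P z` is the limit of
`Φ (t z) / tⁿ ≥ 0` as `t → 0⁺`: `P` is real and non-negative everywhere. On the unit circle
`P z = ∑ c_p z^(2p-n)`, and averaging over the `(2n+1)`-st roots of unity recovers each `c_q`;
in particular `c_m` is the mean of the non-negative values `P (ζᵏ)`. If that mean vanishes, all
`P (ζᵏ)` vanish, and hence so does every `c_q`.
-/

open Finset Filter Topology ComplexConjugate Asymptotics
-- `0 ≤ z` in `ℂ` means that `z` is real and non-negative.
open scoped ComplexOrder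

noncomputable def homogeneousPoly (c : ℕ → ℂ) (n : ℕ) (w : ℂ) : ℂ :=
  ∑ p ∈ range (n + 1), c p * w ^ p * conj w ^ (n - p)

theorem homogeneousPoly_ofReal_mul (c : ℕ → ℂ) (n : ℕ) (t : ℝ) (z : ℂ) :
    homogeneousPoly c n (t * z) = t ^ n * homogeneousPoly c n z := by
  rw [homogeneousPoly, homogeneousPoly, mul_sum]
  refine sum_congr rfl fun p hp => ?_
  rw [map_mul, Complex.conj_ofReal, mul_pow, mul_pow,
    ← Nat.add_sub_cancel' (Nat.lt_succ_iff.mp (mem_range.mp hp)), pow_add, Nat.add_sub_cancel_left]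
  ring

theorem homogeneousPoly_eq_sum_zpow (c : ℕ → ℂ) (n : ℕ) {z : ℂ} (hz : ‖z‖ = 1) :
    homogeneousPoly c n z = ∑ p ∈ range (n + 1), c p * z ^ (2 * (p : ℤ) - n) := by
  have hz0 : z ≠ 0 := norm_ne_zero_iff.mp (by rw [hz]; exact one_ne_zero)
  refine sum_congr rfl fun p hp => ?_
  rw [← Complex.inv_eq_conj hz, mul_assoc, ← zpow_natCast, ← zpow_natCast, inv_zpow',
    ← zpow_add₀ hz0, Nat.cast_sub (Nat.lt_succ_iff.mp (mem_range.mp hp))]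
  ring_nf

theorem IsPrimitiveRoot.sum_pow_zpow_eq_zero {K : Type*} [Field K] {ζ : K} {N : ℕ}
    (hζ : IsPrimitiveRoot ζ N) {d : ℤ} (hd : ¬ (N : ℤ) ∣ d) :
    ∑ k ∈ range N, (ζ ^ k) ^ d = 0 := by
  have hne : ζ ^ d ≠ 1 := by rwa [ne_eq, hζ.zpow_eq_one_iff_dvd]
  have hpow : (ζ ^ d) ^ N = 1 := by
    rw [← zpow_natCast, ← zpow_mul, mul_comm, zpow_mul, hζ.zpow_eq_one, one_zpow]
  simp_rw [← zpow_natCast ζ, ← zpow_mul, mul_comm _ d, zpow_mul, zpow_natCast]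
  rw [geom_sum_eq hne, hpow, sub_self, zero_div]

theorem IsPrimitiveRoot.sum_mul_zpow_neg_eq {K ι : Type*} [Field K] {ζ : K} {N : ℕ}
    (hζ : IsPrimitiveRoot ζ N) (hN : N ≠ 0) {s : Finset ι} (a : ι → K) {e : ι → ℤ}
    (he : ∀ p ∈ s, ∀ q ∈ s, (N : ℤ) ∣ e p - e q → p = q) {q : ι} (hq : q ∈ s) :
    ∑ k ∈ range N, (∑ p ∈ s, a p * (ζ ^ k) ^ e p) * (ζ ^ k) ^ (-e q) = N * a q := by
  have hζ0 : ζ ≠ 0 := hζ.ne_zero hN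
  calc ∑ k ∈ range N, (∑ p ∈ s, a p * (ζ ^ k) ^ e p) * (ζ ^ k) ^ (-e q)
      = ∑ p ∈ s, a p * ∑ k ∈ range N, (ζ ^ k) ^ (e p - e q) := by
        simp_rw [sum_mul, mul_sum, mul_assoc, ← zpow_add₀ (pow_ne_zero _ hζ0), ← sub_eq_add_neg]
        exact sum_comm
    _ = a q * ∑ k ∈ range N, (ζ ^ k) ^ (e q - e q) :=
        sum_eq_single_of_mem q hq fun p hp hpq => by
          rw [hζ.sum_pow_zpow_eq_zero fun h => hpq (he p hp q hq h), mul_zero]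
    _ = N * a q := by simp [mul_comm]

theorem sum_homogeneousPoly_pow_mul_zpow_neg (c : ℕ → ℂ) {n : ℕ} {ζ : ℂ}
    (hζ : IsPrimitiveRoot ζ (2 * n + 1)) {q : ℕ} (hq : q ≤ n) :
    ∑ k ∈ range (2 * n + 1), homogeneousPoly c n (ζ ^ k) * (ζ ^ k) ^ (-(2 * (q : ℤ) - n)) =
      (2 * n + 1 : ℕ) * c q := by
  have hunit : ∀ k, ‖ζ ^ k‖ = 1 := fun k => by
    rw [norm_pow, Complex.norm_eq_one_of_pow_eq_one hζ.pow_eq_one (by omega), one_pow]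
  simp_rw [homogeneousPoly_eq_sum_zpow c n (hunit _)]
  refine hζ.sum_mul_zpow_neg_eq (by omega) c (fun p hp q hq hdvd => ?_)
    (by simpa [Nat.lt_succ_iff])
  simp only [mem_range] at hp hq
  have := Int.eq_zero_of_abs_lt_dvd hdvd (abs_lt.mpr ⟨by omega, by omega⟩)
  omega

theorem middle_coeff_nonneg_of_homogeneousPoly_nonneg {c : ℕ → ℂ} {n m : ℕ} (hnm : n = 2 * m)
    (hP : ∀ z, 0 ≤ homogeneousPoly c n z) :
    0 ≤ c m ∧ (c m = 0 → ∀ p ≤ n, c p = 0) := by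
  obtain ⟨ζ, hζ⟩ : ∃ ζ : ℂ, IsPrimitiveRoot ζ (2 * n + 1) :=
    ⟨_, Complex.isPrimitiveRoot_exp _ (by omega)⟩
  have hN : (0 : ℂ) < (2 * n + 1 : ℕ) := Nat.cast_pos.mpr (by omega)
  have hmean : (2 * n + 1 : ℕ) * c m = ∑ k ∈ range (2 * n + 1), homogeneousPoly c n (ζ ^ k) := by
    rw [← sum_homogeneousPoly_pow_mul_zpow_neg c hζ (by omega : m ≤ n)]
    simp [hnm]
  have hNcm : 0 ≤ (2 * n + 1 : ℕ) * c m := hmean ▸ sum_nonneg fun k _ => hP (ζ ^ k)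
  refine ⟨inv_mul_cancel_left₀ hN.ne' (c m) ▸ mul_nonneg (inv_pos_of_pos hN).le hNcm,
    fun hcm q hq => ?_⟩
  have hzero := (sum_eq_zero_iff_of_nonneg fun k _ => hP (ζ ^ k)).mp
    (by rw [← hmean, hcm, mul_zero])
  have := sum_homogeneousPoly_pow_mul_zpow_neg c hζ hq
  rw [sum_eq_zero fun k hk => by rw [hzero k hk, zero_mul]] at this
  exact (mul_eq_zero.mp this.symm).resolve_left hN.ne'

theorem nonneg_of_isBigO_sub_of_homogeneous {n : ℕ} {P : ℂ → ℂ}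
    (hP : ∀ (t : ℝ) (z : ℂ), P (t * z) = t ^ n * P z) {Φ : ℂ → ℝ}
    (hΦ : ∀ᶠ w in 𝓝 0, 0 ≤ Φ w)
    (hO : (fun w => (Φ w : ℂ) - P w) =O[𝓝 0] fun w => ‖w‖ ^ (n + 1)) (z : ℂ) :
    0 ≤ P z := by
  have hray : Tendsto (fun t : ℝ => (t : ℂ) * z) (𝓝[>] 0) (𝓝 0) := by
    have : Tendsto (fun t : ℝ => (t : ℂ) * z) (𝓝 0) (𝓝 ((0 : ℝ) * z)) :=
      (Complex.continuous_ofReal.mul continuous_const).tendsto 0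
    simpa using this.mono_left nhdsWithin_le_nhds
  obtain ⟨C, hC⟩ := hO.bound
  have hrate : Tendsto (fun t : ℝ => C * ‖z‖ ^ (n + 1) * t) (𝓝[>] 0) (𝓝 0) := by
    have := (tendsto_id (x := 𝓝 (0 : ℝ))).const_mul (C * ‖z‖ ^ (n + 1))
    simpa using this.mono_left nhdsWithin_le_nhds
  have hlim : Tendsto (fun t : ℝ => ((Φ (t * z) / t ^ n : ℝ) : ℂ)) (𝓝[>] 0) (𝓝 (P z)) := by
    rw [tendsto_iff_norm_sub_tendsto_zero]
    refine squeeze_zero_norm' ?_ hrate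
    filter_upwards [hray.eventually hC, self_mem_nhdsWithin] with t ht (htpos : 0 < t)
    have htn : (0 : ℝ) < t ^ n := pow_pos htpos n
    have hdiff : ((Φ (t * z) / t ^ n : ℝ) : ℂ) - P z =
        ((Φ (t * z) : ℂ) - P (t * z)) / (t ^ n : ℝ) := by
      rw [hP]; push_cast; field_simp
    rw [norm_norm, hdiff, norm_div, Complex.norm_real, Real.norm_of_nonneg htn.le, div_le_iff₀ htn]
    calc ‖(Φ (t * z) : ℂ) - P (t * z)‖ ≤ C * ‖‖(t : ℂ) * z‖ ^ (n + 1)‖ := ht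
      _ = C * ‖z‖ ^ (n + 1) * t * t ^ n := by
        rw [norm_pow, norm_norm, norm_mul, Complex.norm_real, Real.norm_of_nonneg htpos.le]; ring
  refine ge_of_tendsto hlim ?_
  filter_upwards [hray.eventually hΦ, self_mem_nhdsWithin] with t ht (htpos : 0 < t)
  exact Complex.zero_le_real.mpr (div_nonneg ht (pow_nonneg htpos.le n))

theorem stmt1_general (Ω : Set ℂ) (hΩ : Ω ∈ nhds (0 : ℂ)) (Φ : ℂ → ℝ)
    (hΦ : ∀ w ∈ Ω, 0 ≤ Φ w) (n m : ℕ) (hnm : n = 2 * m)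
    (c : ℕ → ℂ)
    (hexp : ∃ C > (0 : ℝ), ∃ r > (0 : ℝ), ∀ w : ℂ, ‖w‖ < r →
      ‖(Φ w : ℂ) - ∑ p ∈ Finset.range (n + 1),
          c p * w ^ p * (starRingEnd ℂ w) ^ (n - p)‖ ≤ C * ‖w‖ ^ (n + 1)) :
    (c m).im = 0 ∧ 0 ≤ (c m).re ∧ (c m = 0 → ∀ p ≤ n, c p = 0) := by
  obtain ⟨C, -, r, hr, hbound⟩ := hexp
  have hO : (fun w => (Φ w : ℂ) - homogeneousPoly c n w) =O[𝓝 0] fun w => ‖w‖ ^ (n + 1) :=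
    IsBigO.of_bound C <| by
      filter_upwards [Metric.ball_mem_nhds 0 hr] with w hw
      simpa [homogeneousPoly] using hbound w (mem_ball_zero_iff.mp hw)
  have hP := nonneg_of_isBigO_sub_of_homogeneous (homogeneousPoly_ofReal_mul c n)
    (eventually_of_mem hΩ hΦ) hO
  obtain ⟨hcm, hvanish⟩ := middle_coeff_nonneg_of_homogeneousPoly_nonneg hnm hP
  exact ⟨(Complex.nonneg_iff.mp hcm).2.symm, (Complex.nonneg_iff.mp hcm).1, hvanish⟩

/-- If `Φ ≥ 0` near `0 ∈ ℂ` and `Φ(w) = ∑_{p=0}^{n} c_p w^p conj(w)^{n-p} + O(|w|^{n+1})`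
with `n = 2m` even and positive, then `c_m` is a non-negative real number, and if
`c_m = 0` then all coefficients vanish. -/
theorem stmt1 (Ω : Set ℂ) (hΩ : Ω ∈ nhds (0 : ℂ)) (Φ : ℂ → ℝ)
    (hΦ : ∀ w ∈ Ω, 0 ≤ Φ w) (n m : ℕ) (hn : 0 < n) (hnm : n = 2 * m)
    (c : ℕ → ℂ)
    (hexp : ∃ C > (0 : ℝ), ∃ r > (0 : ℝ), ∀ w : ℂ, ‖w‖ < r →
      ‖(Φ w : ℂ) - ∑ p ∈ Finset.range (n + 1),
          c p * w ^ p * (starRingEnd ℂ w) ^ (n - p)‖ ≤ C * ‖w‖ ^ (n + 1)) :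
    (c m).im = 0 ∧ 0 ≤ (c m).re ∧ (c m = 0 → ∀ p ≤ n, c p = 0) :=
  stmt1_general Ω hΩ Φ hΦ n m hnm c hexp
end

section
/- Let U ⊆ ℂ be open, Δ a neighborhood of 0 in ℂ, and φ : U × Δ → ℝ a smooth function of (z, w) such that φ(z, w) = φ⁰(z) + φ¹(z)·w + conj(φ¹(z))·conj(w) + O(|w|²) uniformly on compact subsets, where φ⁰, φ¹ : U → ℂ are smooth. If φ is plurisubharmonic on U × Δ and φ⁰ ≡ 0, then φ¹ is holomorphic on U. -/
open Complex

/-- Wirtinger derivative `∂_v f` of `f : E → ℂ` at `z` in the direction `v`. -/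
noncomputable def wDeriv {E : Type*} [NormedAddCommGroup E] [NormedSpace ℂ E]
    (f : E → ℂ) (z v : E) : ℂ :=
  (fderiv ℝ f z v - Complex.I * fderiv ℝ f z (Complex.I • v)) / 2

/-- Conjugate Wirtinger derivative `∂̄_v f` of `f : E → ℂ` at `z` in the direction `v`. -/
noncomputable def wBarDeriv {E : Type*} [NormedAddCommGroup E] [NormedSpace ℂ E]
    (f : E → ℂ) (z v : E) : ℂ :=
  (fderiv ℝ f z v + Complex.I * fderiv ℝ f z (Complex.I • v)) / 2

/-- Complex Hessian `∂_v ∂̄_w f` of `f : E → ℂ` at `z`;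
for `E = ℂ^d` this is `∑_{ν,μ} v_ν conj(w_μ) ∂²f/∂z_ν ∂conj(z_μ)`. -/
noncomputable def cHess {E : Type*} [NormedAddCommGroup E] [NormedSpace ℂ E]
    (f : E → ℂ) (z v w : E) : ℂ :=
  wDeriv (fun x => wBarDeriv f x w) z v

/-- A smooth real function is plurisubharmonic on `U` iff its complex Hessian is
positive semi-definite at every point of `U`. -/
def PSHOn {E : Type*} [NormedAddCommGroup E] [NormedSpace ℂ E]
    (φ : E → ℝ) (U : Set E) : Prop :=
  ∀ z ∈ U, ∀ v : E, 0 ≤ (cHess (fun x => (φ x : ℂ)) z v v).re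

namespace Stmt9Aux

variable {E : Type*} [NormedAddCommGroup E] [NormedSpace ℂ E]

lemma conj_explicit (c : ℂ) : (starRingEnd ℂ) c = (c.re : ℂ) - c.im * I := by
  apply Complex.ext <;> simp

lemma smul_decomp (c : ℂ) (v : E) : c • v = c.re • v + c.im • (I • v) := by
  rw [← Complex.coe_smul, ← Complex.coe_smul, smul_smul]
  rw [← add_smul]
  congr 1
  apply Complex.ext <;> simp

lemma fderiv_apply_csmul (f : E → ℂ) (z : E) (c : ℂ) (v : E) :
    (fderiv ℝ f z) (c • v) = (c.re : ℂ) * fderiv ℝ f z v + (c.im : ℂ) * fderiv ℝ f z (I • v) := by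
  rw [smul_decomp c v, map_add, map_smul, map_smul]
  simp [Complex.real_smul]

lemma wDeriv_add_dir (f : E → ℂ) (z v₁ v₂ : E) :
    wDeriv f z (v₁ + v₂) = wDeriv f z v₁ + wDeriv f z v₂ := by
  simp only [wDeriv, smul_add, map_add]; ring

lemma wDeriv_smul_dir (f : E → ℂ) (z : E) (c : ℂ) (v : E) :
    wDeriv f z (c • v) = c * wDeriv f z v := by
  have h1 := fderiv_apply_csmul f z c v
  have h2 : I • (c • v) = c • (I • v) := smul_comm I c v
  have h3 := fderiv_apply_csmul f z c (I • v)
  have h4 : I • I • v = -v := by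
    rw [smul_smul, Complex.I_mul_I, neg_smul, one_smul]
  rw [wDeriv, h1, h2, h3, h4, map_neg, wDeriv]
  linear_combination ((fderiv ℝ f z v - I * fderiv ℝ f z (I • v)) / 2) * Complex.re_add_im c +
    ((c.im : ℂ) * fderiv ℝ f z (I • v) / 2) * Complex.I_sq

lemma wBarDeriv_add_dir (f : E → ℂ) (z w₁ w₂ : E) :
    wBarDeriv f z (w₁ + w₂) = wBarDeriv f z w₁ + wBarDeriv f z w₂ := by
  simp only [wBarDeriv, smul_add, map_add]; ring

lemma wBarDeriv_smul_dir (f : E → ℂ) (z : E) (c : ℂ) (w : E) :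
    wBarDeriv f z (c • w) = (starRingEnd ℂ) c * wBarDeriv f z w := by
  have h1 := fderiv_apply_csmul f z c w
  have h2 : I • (c • w) = c • (I • w) := smul_comm I c w
  have h3 := fderiv_apply_csmul f z c (I • w)
  have h4 : I • I • w = -w := by
    rw [smul_smul, Complex.I_mul_I, neg_smul, one_smul]
  rw [wBarDeriv, h1, h2, h3, h4, map_neg, wBarDeriv, conj_explicit]
  linear_combination ((c.im : ℂ) * fderiv ℝ f z (I • w) / 2) * Complex.I_sq

lemma wDeriv_const_mul {g : E → ℂ} {x : E} (hg : DifferentiableAt ℝ g x) (c : ℂ) (v : E) :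
    wDeriv (fun y => c * g y) x v = c * wDeriv g x v := by
  rw [wDeriv, wDeriv, fderiv_const_mul hg c]
  simp only [ContinuousLinearMap.coe_smul', Pi.smul_apply, smul_eq_mul]
  ring

lemma wDeriv_add {g₁ g₂ : E → ℂ} {x : E} (h₁ : DifferentiableAt ℝ g₁ x)
    (h₂ : DifferentiableAt ℝ g₂ x) (v : E) :
    wDeriv (fun y => g₁ y + g₂ y) x v = wDeriv g₁ x v + wDeriv g₂ x v := by
  rw [wDeriv, wDeriv, wDeriv, fderiv_fun_add h₁ h₂]
  simp only [ContinuousLinearMap.add_apply]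
  ring

lemma wDeriv_const (x : E) (c : ℂ) (v : E) : wDeriv (fun _ => c) x v = 0 := by
  simp [wDeriv]

lemma wBarDeriv_const (x : E) (c : ℂ) (v : E) : wBarDeriv (fun _ => c) x v = 0 := by
  simp [wBarDeriv]

/-! Slice lemmas for `ℂ × ℂ`. -/

lemma fderiv_slice {g : ℂ × ℂ → ℂ} {ψ : ℂ → ℂ} {z : ℂ}
    (hg : DifferentiableAt ℝ g (z, 0))
    (hψ : (fun z' => g (z', 0)) =ᶠ[nhds z] ψ) (a : ℂ) :
    fderiv ℝ g (z, 0) (a, 0) = fderiv ℝ ψ z a := by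
  have h0 : HasFDerivAt (fun z' : ℂ => (z', (0 : ℂ))) (ContinuousLinearMap.inl ℝ ℂ ℂ) z := by
    exact (hasFDerivAt_id z).prodMk (hasFDerivAt_const 0 z)
  have h1 : HasFDerivAt (fun z' => g (z', 0))
      ((fderiv ℝ g (z, 0)).comp (ContinuousLinearMap.inl ℝ ℂ ℂ)) z :=
    hg.hasFDerivAt.comp z h0
  rw [← hψ.fderiv_eq, h1.fderiv]
  simp

lemma wDeriv_slice {g : ℂ × ℂ → ℂ} {ψ : ℂ → ℂ} {z : ℂ}
    (hg : DifferentiableAt ℝ g (z, 0))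
    (hψ : (fun z' => g (z', 0)) =ᶠ[nhds z] ψ) (a : ℂ) :
    wDeriv g (z, 0) (a, 0) = wDeriv ψ z a := by
  have hI : I • ((a : ℂ), (0 : ℂ)) = (I • a, (0 : ℂ)) := by
    simp [Prod.smul_mk]
  rw [wDeriv, wDeriv, fderiv_slice hg hψ a, hI, fderiv_slice hg hψ (I • a)]

lemma wBarDeriv_slice {g : ℂ × ℂ → ℂ} {ψ : ℂ → ℂ} {z : ℂ}
    (hg : DifferentiableAt ℝ g (z, 0))
    (hψ : (fun z' => g (z', 0)) =ᶠ[nhds z] ψ) (a : ℂ) :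
    wBarDeriv g (z, 0) (a, 0) = wBarDeriv ψ z a := by
  have hI : I • ((a : ℂ), (0 : ℂ)) = (I • a, (0 : ℂ)) := by
    simp [Prod.smul_mk]
  rw [wBarDeriv, wBarDeriv, fderiv_slice hg hψ a, hI, fderiv_slice hg hψ (I • a)]

/-! Second-derivative description of `wBarDeriv` and `cHess`. -/

lemma hasFDerivAt_wBar {f : E → ℂ} {p : E} (hf : ContDiffAt ℝ 2 f p) (w : E) :
    HasFDerivAt (fun x => wBarDeriv f x w)
      ((2⁻¹ : ℂ) • (((fderiv ℝ (fderiv ℝ f) p).flip w)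
        + I • ((fderiv ℝ (fderiv ℝ f) p).flip (I • w)))) p := by
  have hd : HasFDerivAt (fderiv ℝ f) (fderiv ℝ (fderiv ℝ f) p) p := by
    have h1 : ContDiffAt ℝ 1 (fderiv ℝ f) p := hf.fderiv_right (by norm_num)
    exact (h1.differentiableAt one_ne_zero).hasFDerivAt
  have h2 : ∀ u : E, HasFDerivAt (fun x => fderiv ℝ f x u)
      ((fderiv ℝ (fderiv ℝ f) p).flip u) p := by
    intro u
    have := hd.clm_apply (hasFDerivAt_const u p)
    simpa using this
  have h3 := (((h2 w).add ((h2 (I • w)).const_smul I)).const_smul (2⁻¹ : ℂ))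
  apply h3.congr_of_eventuallyEq
  filter_upwards with x
  simp only [wBarDeriv, smul_eq_mul, Pi.add_apply, Pi.smul_apply]
  ring

lemma cHess_formula {f : E → ℂ} {p : E} (hf : ContDiffAt ℝ 2 f p) (v w : E) :
    cHess f p v w =
      (fderiv ℝ (fderiv ℝ f) p v w + I * fderiv ℝ (fderiv ℝ f) p v (I • w)
        - I * fderiv ℝ (fderiv ℝ f) p (I • v) w
        + fderiv ℝ (fderiv ℝ f) p (I • v) (I • w)) / 4 := by
  have hM := (hasFDerivAt_wBar hf w).fderiv
  rw [cHess, wDeriv, hM]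
  simp only [ContinuousLinearMap.coe_smul', Pi.smul_apply, ContinuousLinearMap.add_apply,
    ContinuousLinearMap.flip_apply, smul_eq_mul, ContinuousLinearMap.smul_apply]
  linear_combination (-(fderiv ℝ (fderiv ℝ f) p (I • v) (I • w)) / 4) * Complex.I_sq

lemma differentiableAt_wBar {f : E → ℂ} {p : E} (hf : ContDiffAt ℝ 2 f p) (w : E) :
    DifferentiableAt ℝ (fun x => wBarDeriv f x w) p :=
  (hasFDerivAt_wBar hf w).differentiableAt

lemma cHess_add_w {f : E → ℂ} {p : E} (hf : ContDiffAt ℝ 2 f p) (v w₁ w₂ : E) :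
    cHess f p v (w₁ + w₂) = cHess f p v w₁ + cHess f p v w₂ := by
  have h : (fun x => wBarDeriv f x (w₁ + w₂))
      = fun x => wBarDeriv f x w₁ + wBarDeriv f x w₂ := by
    funext x; exact wBarDeriv_add_dir f x w₁ w₂
  rw [cHess, h, wDeriv_add (differentiableAt_wBar hf w₁) (differentiableAt_wBar hf w₂)]
  rfl

lemma cHess_smul_w {f : E → ℂ} {p : E} (hf : ContDiffAt ℝ 2 f p) (v : E) (c : ℂ) (w : E) :
    cHess f p v (c • w) = (starRingEnd ℂ) c * cHess f p v w := by
  have h : (fun x => wBarDeriv f x (c • w))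
      = fun x => (starRingEnd ℂ) c * wBarDeriv f x w := by
    funext x; exact wBarDeriv_smul_dir f x c w
  rw [cHess, h, wDeriv_const_mul (differentiableAt_wBar hf w)]
  rfl

lemma cHess_add_v (f : E → ℂ) (p v₁ v₂ w : E) :
    cHess f p (v₁ + v₂) w = cHess f p v₁ w + cHess f p v₂ w :=
  wDeriv_add_dir _ p v₁ v₂

lemma cHess_smul_v (f : E → ℂ) (p : E) (c : ℂ) (v w : E) :
    cHess f p (c • v) w = c * cHess f p v w :=
  wDeriv_smul_dir _ p c v

lemma wDeriv_conj {g : ℂ → ℂ} {z : ℂ} (h : DifferentiableAt ℝ g z) (v : ℂ) :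
    wDeriv (fun z' => (starRingEnd ℂ) (g z')) z v = (starRingEnd ℂ) (wBarDeriv g z v) := by
  have hc : HasFDerivAt (fun z' => (starRingEnd ℂ) (g z'))
      ((Complex.conjCLE.toContinuousLinearMap).comp (fderiv ℝ g z)) z := by
    have := (Complex.conjCLE.toContinuousLinearMap.hasFDerivAt (x := g z)).comp z h.hasFDerivAt
    apply this.congr_of_eventuallyEq
    filter_upwards with x
    simp [Function.comp]
  rw [wDeriv, wBarDeriv, hc.fderiv]
  simp only [ContinuousLinearMap.coe_comp', Function.comp_apply,
    ContinuousLinearEquiv.coe_coe, Complex.conjCLE_apply]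
  rw [map_div₀, map_add, map_mul, Complex.conj_I]
  simp only [map_ofNat]
  ring

lemma cHess_conj {φ : E → ℝ} {p : E} (hφ : ContDiffAt ℝ 2 φ p)
    (hφd : ∀ᶠ x in nhds p, DifferentiableAt ℝ φ x) (v w : E) :
    (starRingEnd ℂ) (cHess (fun x => (φ x : ℂ)) p v w)
      = cHess (fun x => (φ x : ℂ)) p w v := by
  set f : E → ℂ := fun x => (φ x : ℂ) with hf_def
  have hf : ContDiffAt ℝ 2 f p := Complex.ofRealCLM.contDiff.contDiffAt.comp p hφ
  have hdφ : HasFDerivAt (fderiv ℝ φ) (fderiv ℝ (fderiv ℝ φ) p) p :=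
    ((hφ.fderiv_right (m := 1) (by norm_num)).differentiableAt one_ne_zero).hasFDerivAt
  have hev : fderiv ℝ f =ᶠ[nhds p] fun x => Complex.ofRealCLM.comp (fderiv ℝ φ x) := by
    filter_upwards [hφd] with x hx
    exact (Complex.ofRealCLM.hasFDerivAt.comp x hx.hasFDerivAt).fderiv
  have hcomp : HasFDerivAt (fun x => Complex.ofRealCLM.comp (fderiv ℝ φ x))
      ((ContinuousLinearMap.compL ℝ E ℝ ℂ Complex.ofRealCLM).comp
        (fderiv ℝ (fderiv ℝ φ) p)) p := by
    have := ((ContinuousLinearMap.compL ℝ E ℝ ℂ Complex.ofRealCLM).hasFDerivAt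
      (x := fderiv ℝ φ p)).comp p hdφ
    apply this.congr_of_eventuallyEq
    filter_upwards with x
    simp [Function.comp]
  have hF : fderiv ℝ (fderiv ℝ f) p
      = (ContinuousLinearMap.compL ℝ E ℝ ℂ Complex.ofRealCLM).comp
        (fderiv ℝ (fderiv ℝ φ) p) := by
    rw [hev.fderiv_eq]; exact hcomp.fderiv
  have hFr : ∀ a b : E, fderiv ℝ (fderiv ℝ f) p a b
      = ((fderiv ℝ (fderiv ℝ φ) p a b : ℝ) : ℂ) := by
    intro a b; rw [hF]; simp
  have hsymm : ∀ a b : E, fderiv ℝ (fderiv ℝ φ) p a b = fderiv ℝ (fderiv ℝ φ) p b a :=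
    hφ.isSymmSndFDerivAt (by simp)
  rw [cHess_formula hf v w, cHess_formula hf w v]
  simp only [hFr]
  rw [map_div₀, map_add, map_sub, map_add, map_mul, map_mul, Complex.conj_I,
    Complex.conj_ofReal, Complex.conj_ofReal, Complex.conj_ofReal, Complex.conj_ofReal]
  rw [hsymm w v, hsymm w (I • v), hsymm (I • w) v, hsymm (I • w) (I • v)]
  simp only [map_ofNat]
  ring

end Stmt9Aux

/-- If `φ(z,w) = φ⁰(z) + φ¹(z)·w + conj(φ¹(z))·conj(w) + O(|w|²)` (uniformly on compact
subsets of `U`) is smooth and plurisubharmonic on `U ×ˢ Δ` and `φ⁰ ≡ 0`, then `φ¹` is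
holomorphic on `U`. -/
theorem stmt9 (U Δ : Set ℂ) (hU : IsOpen U) (hΔ : Δ ∈ nhds (0 : ℂ))
    (φ : ℂ × ℂ → ℝ) (hsm : ContDiffOn ℝ (⊤ : ℕ∞) φ (U ×ˢ Δ))
    (φ0 φ1 : ℂ → ℂ) (hφ0sm : ContDiffOn ℝ (⊤ : ℕ∞) φ0 U) (hφ1sm : ContDiffOn ℝ (⊤ : ℕ∞) φ1 U)
    (hexp : ∀ K : Set ℂ, K ⊆ U → IsCompact K → ∃ C > (0 : ℝ), ∃ r > (0 : ℝ),
      ∀ z ∈ K, ∀ w : ℂ, ‖w‖ < r → (z, w) ∈ U ×ˢ Δ →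
        ‖(φ (z, w) : ℂ) - (φ0 z + φ1 z * w + (starRingEnd ℂ (φ1 z)) * (starRingEnd ℂ w))‖
          ≤ C * ‖w‖ ^ 2)
    (hpsh : PSHOn φ (U ×ˢ Δ))
    (h0 : ∀ z ∈ U, φ0 z = 0) :
    DifferentiableOn ℂ φ1 U := by
  obtain ⟨V, hVΔ, hVopen, hV0⟩ := mem_nhds_iff.1 hΔ
  have h0Δ : (0 : ℂ) ∈ Δ := mem_of_mem_nhds hΔ
  set f : ℂ × ℂ → ℂ := fun x => (φ x : ℂ) with hf_def
  have hΩ : IsOpen (U ×ˢ V) := hU.prod hVopen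
  have hΩsub : U ×ˢ V ⊆ U ×ˢ Δ := Set.prod_mono subset_rfl hVΔ
  have hmemΩ : ∀ z ∈ U, (z, (0:ℂ)) ∈ U ×ˢ V := fun z hz => ⟨hz, hV0⟩
  have hφat : ∀ q ∈ U ×ˢ V, ContDiffAt ℝ 2 φ q := fun q hq =>
    ((hsm.mono hΩsub).contDiffAt (hΩ.mem_nhds hq)).of_le (by exact WithTop.coe_le_coe.2 (le_top : (2:ℕ∞) ≤ ⊤))
  have hφdiff : ∀ q ∈ U ×ˢ V, DifferentiableAt ℝ φ q := fun q hq =>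
    (hφat q hq).differentiableAt two_ne_zero
  have hfat : ∀ q ∈ U ×ˢ V, ContDiffAt ℝ 2 f q := fun q hq =>
    Complex.ofRealCLM.contDiff.contDiffAt.comp q (hφat q hq)
  have hfdiff : ∀ q ∈ U ×ˢ V, DifferentiableAt ℝ f q := fun q hq =>
    (hfat q hq).differentiableAt two_ne_zero
  -- the function vanishes on the slice {w = 0}
  have hslice0 : ∀ z' ∈ U, φ (z', 0) = 0 := by
    intro z' hz'
    obtain ⟨C, hC, r, hr, hb⟩ := hexp {z'} (Set.singleton_subset_iff.2 hz') isCompact_singleton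
    have hkey := hb z' (Set.mem_singleton _) 0 (by simpa using hr) ⟨hz', h0Δ⟩
    rw [h0 z' hz'] at hkey
    simp only [map_zero, mul_zero, add_zero, zero_add, norm_zero, ne_eq, OfNat.ofNat_ne_zero,
      not_false_eq_true, zero_pow, sub_zero] at hkey
    exact_mod_cast norm_le_zero_iff.1 hkey
  -- derivative of φ in the w-direction at (z', 0)
  have hwder : ∀ z' ∈ U, ∀ w : ℂ, fderiv ℝ φ (z', 0) (0, w) = 2 * (φ1 z' * w).re := by
    intro z' hz'
    set L0 : ℂ →L[ℝ] ℝ :=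
      (2:ℝ) • (Complex.reCLM.comp (ContinuousLinearMap.mul ℝ ℂ (φ1 z'))) with hL0
    have hL0app : ∀ w : ℂ, L0 w = 2 * (φ1 z' * w).re := by
      intro w
      simp [hL0]
    have hder : HasFDerivAt (fun w => φ (z', w)) L0 0 := by
      rw [hasFDerivAt_iff_isLittleO_nhds_zero]
      obtain ⟨C, hC, r, hr, hb⟩ := hexp {z'} (Set.singleton_subset_iff.2 hz') isCompact_singleton
      have hbig : (fun w : ℂ => φ (z', 0 + w) - φ (z', 0) - L0 w) =O[nhds 0]
          (fun w : ℂ => ‖w‖^2) := by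
        rw [Asymptotics.isBigO_iff]
        refine ⟨C, ?_⟩
        filter_upwards [hVopen.mem_nhds hV0, Metric.ball_mem_nhds (0:ℂ) hr] with w hwV hwr
        have hwr' : ‖w‖ < r := by simpa [Metric.mem_ball, dist_zero_right] using hwr
        have hkey := hb z' (Set.mem_singleton _) w hwr' ⟨hz', hVΔ hwV⟩
        rw [h0 z' hz'] at hkey
        have hid : ((φ (z', 0 + w) - φ (z', 0) - L0 w : ℝ) : ℂ)
            = (φ (z', w) : ℂ)
              - ((0:ℂ) + φ1 z' * w + (starRingEnd ℂ) (φ1 z') * (starRingEnd ℂ) w) := by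
          rw [zero_add, hslice0 z' hz', hL0app, ← map_mul]
          apply Complex.ext <;> simp <;> ring
        calc ‖φ (z', 0 + w) - φ (z', 0) - L0 w‖
            = ‖((φ (z', 0 + w) - φ (z', 0) - L0 w : ℝ) : ℂ)‖ := by
              rw [Complex.norm_real]
          _ = ‖(φ (z', w) : ℂ)
              - ((0:ℂ) + φ1 z' * w + (starRingEnd ℂ) (φ1 z') * (starRingEnd ℂ) w)‖ := by
              rw [hid]
          _ ≤ C * ‖w‖^2 := hkey
          _ = C * ‖(‖w‖^2 : ℝ)‖ := by
              rw [Real.norm_of_nonneg (by positivity)]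
      exact hbig.trans_isLittleO (Asymptotics.isLittleO_norm_pow_id one_lt_two)
    have hcomp : HasFDerivAt (fun w => φ (z', w))
        ((fderiv ℝ φ (z', 0)).comp (ContinuousLinearMap.inr ℝ ℂ ℂ)) 0 :=
      (hφdiff _ (hmemΩ z' hz')).hasFDerivAt.comp 0 (hasFDerivAt_prodMk_right z' 0)
    have huniq := hder.unique hcomp
    intro w
    have happ := congrArg (fun (L : ℂ →L[ℝ] ℝ) => L w) huniq
    simp only [hL0app, ContinuousLinearMap.coe_comp', Function.comp_apply,
      ContinuousLinearMap.inr_apply] at happ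
    exact happ.symm
  -- fderiv of f in terms of fderiv of φ
  have hfderiv_eq : ∀ q ∈ U ×ˢ V, ∀ u : ℂ × ℂ,
      fderiv ℝ f q u = ((fderiv ℝ φ q u : ℝ) : ℂ) := by
    intro q hq u
    have h : fderiv ℝ f q = Complex.ofRealCLM.comp (fderiv ℝ φ q) :=
      (Complex.ofRealCLM.hasFDerivAt.comp q (hφdiff q hq).hasFDerivAt).fderiv
    rw [h]; rfl
  -- ∂̄_w f on the slice equals conj φ1
  have hgslice : ∀ z' ∈ U, wBarDeriv f (z', 0) ((0:ℂ), (1:ℂ)) = (starRingEnd ℂ) (φ1 z') := by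
    intro z' hz'
    have hq := hmemΩ z' hz'
    have hI : I • (((0:ℂ), (1:ℂ)) : ℂ × ℂ) = ((0:ℂ), I) := by
      simp [Prod.smul_mk]
    rw [wBarDeriv, hI, hfderiv_eq _ hq, hfderiv_eq _ hq, hwder z' hz' 1, hwder z' hz' I]
    apply Complex.ext <;>
      simp [Complex.div_re, Complex.div_im, Complex.normSq, Complex.mul_re, Complex.mul_im] <;>
      ring
  -- ∂̄_z f vanishes on the slice
  have hAslice : ∀ z' ∈ U, wBarDeriv f (z', 0) ((1:ℂ), (0:ℂ)) = 0 := by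
    intro z' hz'
    have hev : (fun z'' => f (z'', 0)) =ᶠ[nhds z'] (fun _ => (0:ℂ)) := by
      filter_upwards [hU.mem_nhds hz'] with x hx
      simp [hf_def, hslice0 x hx]
    rw [Stmt9Aux.wBarDeriv_slice (hfdiff _ (hmemΩ z' hz')) hev 1, Stmt9Aux.wBarDeriv_const]
  -- main argument at a fixed point z
  intro z hz
  have hp : ((z : ℂ), (0:ℂ)) ∈ U ×ˢ V := hmemΩ z hz
  have hf2 : ContDiffAt ℝ 2 f (z, 0) := hfat _ hp
  have hA : cHess f (z, 0) (1, 0) (1, 0) = 0 := by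
    have hev : (fun z' => wBarDeriv f (z', 0) ((1:ℂ),(0:ℂ))) =ᶠ[nhds z] (fun _ => (0:ℂ)) := by
      filter_upwards [hU.mem_nhds hz] with x hx using hAslice x hx
    rw [cHess, Stmt9Aux.wDeriv_slice (Stmt9Aux.differentiableAt_wBar hf2 _) hev 1,
      Stmt9Aux.wDeriv_const]
  have hφ1d : DifferentiableAt ℝ φ1 z :=
    (hφ1sm.contDiffAt (hU.mem_nhds hz)).differentiableAt (by simp)
  have hB : cHess f (z, 0) (1, 0) (0, 1) = (starRingEnd ℂ) (wBarDeriv φ1 z 1) := by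
    have hev : (fun z' => wBarDeriv f (z', 0) ((0:ℂ),(1:ℂ)))
        =ᶠ[nhds z] (fun z' => (starRingEnd ℂ) (φ1 z')) := by
      filter_upwards [hU.mem_nhds hz] with x hx using hgslice x hx
    rw [cHess, Stmt9Aux.wDeriv_slice (Stmt9Aux.differentiableAt_wBar hf2 _) hev 1,
      Stmt9Aux.wDeriv_conj hφ1d]
  have hφd_ev : ∀ᶠ x in nhds ((z : ℂ), (0:ℂ)), DifferentiableAt ℝ φ x := by
    filter_upwards [hΩ.mem_nhds hp] with q hq using hφdiff q hq
  have hB2 : cHess f (z,0) (0,1) (1,0) = (starRingEnd ℂ) (cHess f (z,0) (1,0) (0,1)) :=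
    (Stmt9Aux.cHess_conj (hφat _ hp) hφd_ev ((1:ℂ),(0:ℂ)) ((0:ℂ),(1:ℂ))).symm
  have hexpand : ∀ t : ℂ, cHess f (z,0) (1,t) (1,t)
      = cHess f (z,0) (1,0) (1,0) + (starRingEnd ℂ) t * cHess f (z,0) (1,0) (0,1)
        + t * cHess f (z,0) (0,1) (1,0)
        + t * ((starRingEnd ℂ) t * cHess f (z,0) (0,1) (0,1)) := by
    intro t
    have hv : (((1:ℂ), t) : ℂ × ℂ) = ((1:ℂ),(0:ℂ)) + t • ((0:ℂ),(1:ℂ)) := by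
      simp [Prod.ext_iff]
    rw [hv]
    simp only [Stmt9Aux.cHess_add_v, Stmt9Aux.cHess_smul_v, Stmt9Aux.cHess_add_w hf2,
      Stmt9Aux.cHess_smul_w hf2]
    ring
  have hQ : ∀ t : ℂ, 0 ≤ (cHess f (z,0) (1,t) (1,t)).re := by
    intro t
    exact hpsh (z,0) ⟨hz, h0Δ⟩ (1, t)
  set B := cHess f (z,0) (1,0) (0,1) with hBdef
  set Cc := cHess f (z,0) (0,1) (0,1) with hCdef
  have hkey : ∀ ε : ℝ, 0 < ε →
      0 ≤ -2*ε*Complex.normSq B + ε^2 * Complex.normSq B * Cc.re := by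
    intro ε hε
    have hQ' := hQ (-(ε:ℂ) * B)
    rw [hexpand, hA, hB2] at hQ'
    have hm : (starRingEnd ℂ) B * B = ((Complex.normSq B : ℝ) : ℂ) := by
      rw [mul_comm, Complex.mul_conj]
    have hm' : B * (starRingEnd ℂ) B = ((Complex.normSq B : ℝ) : ℂ) := Complex.mul_conj B
    have e1 : (0:ℂ) + (starRingEnd ℂ) (-(ε:ℂ)*B) * B + (-(ε:ℂ)*B) * (starRingEnd ℂ) B
        + (-(ε:ℂ)*B)*((starRingEnd ℂ) (-(ε:ℂ)*B) * Cc)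
        = ((-2*ε*Complex.normSq B : ℝ) : ℂ) + ((ε^2*Complex.normSq B : ℝ):ℂ) * Cc := by
      simp only [map_mul, map_neg, Complex.conj_ofReal]
      push_cast
      linear_combination (-(ε:ℂ)) * hm + (-(ε:ℂ)) * hm' + ((ε:ℂ)^2 * Cc) * hm'
    rw [e1] at hQ'
    simp only [Complex.add_re, Complex.ofReal_re, Complex.mul_re, Complex.ofReal_im,
      zero_mul, sub_zero] at hQ'
    nlinarith [hQ']
  have hs : Complex.normSq B = 0 := by
    by_contra hne
    have hspos : 0 < Complex.normSq B :=
      lt_of_le_of_ne (Complex.normSq_nonneg B) (Ne.symm hne)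
    set c := Cc.re with hc_def
    have hεpos : (0:ℝ) < 1/(|c|+1) := by positivity
    have h1 := hkey _ hεpos
    have h2 : (1/(|c|+1)) * c ≤ 1 := by
      rw [div_mul_eq_mul_div, div_le_one (by positivity)]
      nlinarith [le_abs_self c, abs_nonneg c]
    nlinarith [mul_le_mul_of_nonneg_left h2 (mul_pos hεpos hspos).le, h1, hspos, hεpos]
  have hBzero : B = 0 := by
    rwa [← Complex.normSq_eq_zero]
  have hwbar0 : wBarDeriv φ1 z 1 = 0 := by
    rw [hBzero] at hB
    rw [starRingEnd_apply, eq_comm, star_eq_zero] at hB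
    exact hB.symm ▸ rfl
  -- Cauchy–Riemann: conclude complex differentiability
  set L := fderiv ℝ φ1 z with hL
  have hLI : L I = I * L 1 := by
    rw [wBarDeriv] at hwbar0
    have hI1 : I • (1:ℂ) = I := by simp
    rw [hI1] at hwbar0
    have h := (div_eq_zero_iff.1 hwbar0).resolve_right (by norm_num)
    linear_combination (-I) * h + (L I) * Complex.I_sq
  set M : ℂ →L[ℂ] ℂ := (L 1) • (1 : ℂ →L[ℂ] ℂ) with hMdef
  have hM : M.restrictScalars ℝ = L := by
    apply ContinuousLinearMap.ext
    intro v
    have hv : v = (v.re : ℂ) * 1 + (v.im : ℂ) * I := by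
      apply Complex.ext <;> simp
    have hLv : L v = (v.re : ℂ) * L 1 + (v.im : ℂ) * L I := by
      nth_rewrite 1 [hv]
      have : ((v.re : ℂ) * 1 + (v.im : ℂ) * I) = v.re • (1:ℂ) + v.im • I := by
        simp [Complex.real_smul]
      rw [this, map_add, map_smul, map_smul, Complex.real_smul, Complex.real_smul]
    rw [hLv, hLI]
    have hres : (M.restrictScalars ℝ) v = M v := by
      rw [ContinuousLinearMap.coe_restrictScalars']
    rw [hres, hMdef]
    simp only [ContinuousLinearMap.smul_apply, ContinuousLinearMap.one_apply, smul_eq_mul]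
    nth_rewrite 1 [hv]
    ring
  have hder : HasFDerivAt φ1 M z :=
    hasFDerivAt_of_restrictScalars ℝ hφ1d.hasFDerivAt hM
  exact hder.differentiableAt.differentiableWithinAt
end
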